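/- arXiv:2503.14366 — 2 statements merged into one kernel-verified Lean document; each statement's English description precedes it below -/
import Mathlib

section
/- Let E : ℝ → ℝ be twice differentiable on (θ−h₀, θ+h₀) with |E''| ≤ μ there, and suppose the noisy evaluations satisfy Ē(x) = E(x) + ε(x), where ε(θ+h) and ε(θ) are independent zero-mean random variables each of variance at most ς²/N. Then for 0 < h < h₀, the mean-squared error of the forward finite-difference gradient estimate satisfies E[((Ē(θ+h) − Ē(θ))/h − E'(θ))²] ≤ (1/4)μ²h² + 2ς²/(h²N). -/
/-!
The error of the noisy forward difference is the deterministic Taylor bias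
`(E (θ + h) - E θ) / h - E' θ`, of size at most `μ h / 2`, plus the centred noise
`(ε₁ - ε₂) / h`. The cross term integrates to zero, and by independence the noise has
variance `(Var ε₁ + Var ε₂) / h ^ 2`.
-/

open MeasureTheory ProbabilityTheory Set

section Taylor

variable {f f' f'' : ℝ → ℝ} {a b μ : ℝ}

lemma abs_deriv_sub_le_of_abs_deriv2_le
    (hf' : ∀ x ∈ Icc a b, HasDerivAt f' (f'' x) x) (hμ : ∀ x ∈ Icc a b, |f'' x| ≤ μ) :
    ∀ x ∈ Icc a b, |f' x - f' a| ≤ μ * (x - a) :=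
  norm_image_sub_le_of_norm_deriv_le_segment' (fun x hx => (hf' x hx).hasDerivWithinAt)
    (fun x hx => hμ x (Ico_subset_Icc_self hx))

lemma abs_sub_sub_deriv_mul_le_of_abs_deriv2_le (hab : a ≤ b)
    (hf : ∀ x ∈ Icc a b, HasDerivAt f (f' x) x)
    (hf' : ∀ x ∈ Icc a b, HasDerivAt f' (f'' x) x) (hμ : ∀ x ∈ Icc a b, |f'' x| ≤ μ) :
    |f b - f a - f' a * (b - a)| ≤ μ / 2 * (b - a) ^ 2 := by
  have hg : ∀ x ∈ Icc a b,
      HasDerivAt (fun x => f x - f a - f' a * (x - a)) (f' x - f' a) x := fun x hx =>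
    (((hf x hx).sub_const (f a)).fun_sub
      (((hasDerivAt_id' x).sub_const a).const_mul (f' a))).congr_deriv (by ring)
  have hB : ∀ x, HasDerivAt (fun x => μ / 2 * (x - a) ^ 2) (μ * (x - a)) x := fun x =>
    ((((hasDerivAt_id' x).sub_const a).fun_pow 2).const_mul (μ / 2)).congr_deriv
      (by push_cast; ring)
  refine image_norm_le_of_norm_deriv_right_le_deriv_boundary
    (fun x hx => (hg x hx).continuousAt.continuousWithinAt)
    (fun x hx => (hg x (Ico_subset_Icc_self hx)).hasDerivWithinAt) (by simp) hB
    (fun x hx => abs_deriv_sub_le_of_abs_deriv2_le hf' hμ x (Ico_subset_Icc_self hx))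
    (right_mem_Icc.2 hab)

lemma sq_forward_diff_sub_deriv_le {h : ℝ} (hh : 0 < h)
    (hf : ∀ x ∈ Icc a (a + h), HasDerivAt f (f' x) x)
    (hf' : ∀ x ∈ Icc a (a + h), HasDerivAt f' (f'' x) x)
    (hμ : ∀ x ∈ Icc a (a + h), |f'' x| ≤ μ) :
    ((f (a + h) - f a) / h - f' a) ^ 2 ≤ 1 / 4 * μ ^ 2 * h ^ 2 := by
  have htaylor := abs_sub_sub_deriv_mul_le_of_abs_deriv2_le (by linarith) hf hf' hμ
  rw [add_sub_cancel_left] at htaylor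
  have hdiff : (f (a + h) - f a) / h - f' a = (f (a + h) - f a - f' a * h) / h := by
    field_simp
  have habs : |(f (a + h) - f a) / h - f' a| ≤ μ / 2 * h := by
    rw [hdiff, abs_div, abs_of_pos hh, div_le_iff₀ hh]
    linarith
  calc ((f (a + h) - f a) / h - f' a) ^ 2 = |(f (a + h) - f a) / h - f' a| ^ 2 := (sq_abs _).symm
    _ ≤ (μ / 2 * h) ^ 2 := pow_le_pow_left₀ (abs_nonneg _) habs 2
    _ = 1 / 4 * μ ^ 2 * h ^ 2 := by ring

end Taylor

namespace ProbabilityTheory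

variable {Ω : Type*} [MeasurableSpace Ω] {P : Measure Ω} {X Y : Ω → ℝ}

lemma IndepFun.variance_sub (hX : MemLp X 2 P) (hY : MemLp Y 2 P) (h : IndepFun X Y P) :
    variance (X - Y) P = variance X P + variance Y P := by
  rw [sub_eq_add_neg, h.neg_right.variance_add hX hY.neg, variance_neg]

lemma integral_const_add_sq [IsProbabilityMeasure P] (hX : MemLp X 2 P) (hX₀ : ∫ ω, X ω ∂P = 0)
    (c : ℝ) : ∫ ω, (c + X ω) ^ 2 ∂P = c ^ 2 + variance X P := by
  have hmean : ∫ ω, (c + X ω) ∂P = c := by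
    rw [integral_add (integrable_const c) (hX.integrable one_le_two), hX₀]
    simp
  have hvar := variance_eq_sub (X := fun ω => c + X ω) ((memLp_const c).add hX)
  rw [variance_const_add hX.aestronglyMeasurable] at hvar
  simp only [Pi.pow_apply, hmean] at hvar
  linarith

end ProbabilityTheory

theorem stmt_5_general {Ω : Type*} [MeasurableSpace Ω] (P : Measure Ω) [IsProbabilityMeasure P]
    (θ h₀ μ ς : ℝ) (N : ℕ)
    (E E' E'' : ℝ → ℝ)
    (hE' : ∀ x ∈ Ioo (θ - h₀) (θ + h₀), HasDerivAt E (E' x) x)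
    (hE'' : ∀ x ∈ Ioo (θ - h₀) (θ + h₀), HasDerivAt E' (E'' x) x)
    (hbound : ∀ x ∈ Ioo (θ - h₀) (θ + h₀), |E'' x| ≤ μ)
    (h : ℝ) (hh : 0 < h) (hhlt : h < h₀)
    (ε₁ ε₂ : Ω → ℝ) (hm₁ : MemLp ε₁ 2 P) (hm₂ : MemLp ε₂ 2 P)
    (hind : IndepFun ε₁ ε₂ P)
    (hmean₁ : ∫ ω, ε₁ ω ∂P = 0) (hmean₂ : ∫ ω, ε₂ ω ∂P = 0)
    (hvar₁ : variance ε₁ P ≤ ς ^ 2 / N) (hvar₂ : variance ε₂ P ≤ ς ^ 2 / N) :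
    ∫ ω, (((E (θ + h) + ε₁ ω) - (E θ + ε₂ ω)) / h - E' θ) ^ 2 ∂P
      ≤ (1 / 4) * μ ^ 2 * h ^ 2 + 2 * ς ^ 2 / (h ^ 2 * N) := by
  have hIcc : Icc θ (θ + h) ⊆ Ioo (θ - h₀) (θ + h₀) := fun x hx =>
    ⟨by linarith [hx.1], by linarith [hx.2]⟩
  have hbias := sq_forward_diff_sub_deriv_le hh (fun x hx => hE' x (hIcc hx))
    (fun x hx => hE'' x (hIcc hx)) (fun x hx => hbound x (hIcc hx))
  set noise : Ω → ℝ := fun ω => h⁻¹ * (ε₁ - ε₂) ω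
  have hnoise : MemLp noise 2 P := (hm₁.sub hm₂).const_mul h⁻¹
  have hnoise_mean : ∫ ω, noise ω ∂P = 0 := by
    simp only [noise, integral_const_mul, Pi.sub_apply,
      integral_sub (hm₁.integrable one_le_two) (hm₂.integrable one_le_two), hmean₁, hmean₂,
      sub_zero, mul_zero]
  have hnoise_var : variance noise P = (h ^ 2)⁻¹ * (variance ε₁ P + variance ε₂ P) := by
    rw [variance_const_mul, hind.variance_sub hm₁ hm₂, inv_pow]
  have hsplit : ∀ ω, ((E (θ + h) + ε₁ ω) - (E θ + ε₂ ω)) / h - E' θ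
      = ((E (θ + h) - E θ) / h - E' θ) + noise ω := fun ω => by
    simp only [noise, Pi.sub_apply]; field_simp; ring
  simp_rw [hsplit]
  rw [integral_const_add_sq hnoise hnoise_mean, hnoise_var]
  have hnoise_le : (h ^ 2)⁻¹ * (variance ε₁ P + variance ε₂ P) ≤ 2 * ς ^ 2 / (h ^ 2 * N) := by
    rw [inv_mul_le_iff₀ (by positivity), mul_div_assoc', mul_div_mul_left _ _ (by positivity),
      mul_div_assoc]
    linarith
  linarith

/-- Statement (1) of Theorem 1 (QuGStep): mean-squared error bound for the
noisy forward finite-difference gradient estimate. -/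
theorem stmt_5 {Ω : Type*} [MeasurableSpace Ω] (P : Measure Ω) [IsProbabilityMeasure P]
    (θ h₀ μ ς : ℝ) (hh₀ : 0 < h₀) (hμ : 0 < μ) (hς : 0 < ς) (N : ℕ) (hN : 0 < N)
    (E E' E'' : ℝ → ℝ)
    (hE' : ∀ x ∈ Ioo (θ - h₀) (θ + h₀), HasDerivAt E (E' x) x)
    (hE'' : ∀ x ∈ Ioo (θ - h₀) (θ + h₀), HasDerivAt E' (E'' x) x)
    (hbound : ∀ x ∈ Ioo (θ - h₀) (θ + h₀), |E'' x| ≤ μ)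
    (h : ℝ) (hh : 0 < h) (hhlt : h < h₀)
    (ε₁ ε₂ : Ω → ℝ) (hm₁ : MemLp ε₁ 2 P) (hm₂ : MemLp ε₂ 2 P)
    (hind : IndepFun ε₁ ε₂ P)
    (hmean₁ : ∫ ω, ε₁ ω ∂P = 0) (hmean₂ : ∫ ω, ε₂ ω ∂P = 0)
    (hvar₁ : variance ε₁ P ≤ ς ^ 2 / N) (hvar₂ : variance ε₂ P ≤ ς ^ 2 / N) :
    ∫ ω, (((E (θ + h) + ε₁ ω) - (E θ + ε₂ ω)) / h - E' θ) ^ 2 ∂P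
      ≤ (1 / 4) * μ ^ 2 * h ^ 2 + 2 * ς ^ 2 / (h ^ 2 * N) :=
  stmt_5_general P θ h₀ μ ς N E E' E'' hE' hE'' hbound h hh hhlt ε₁ ε₂ hm₁ hm₂ hind hmean₁ hmean₂
    hvar₁ hvar₂
end

section
/- Let E : ℝ → ℝ be twice differentiable with |E''| ≤ μ globally, and suppose for each evaluation point the noise is an independent zero-mean random variable with variance at most ς²/N. Then for every h > 0 the root-mean-squared error of the forward-difference gradient estimate is at most √((1/4)μ²h² + 2ς²/(h²N)), and choosing h = h_N = 8^(1/4)ς^(1/2)μ^(−1/2)N^(−1/4) makes this RMSE at most (2)^(1/4)·√(μς)·N^(−1/4). -/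
/-!
The error of the noisy forward difference is `b + (ε(θ+h) - ε(θ))/h`, where the deterministic bias
`b = (E(θ+h) - E(θ))/h - E'(θ)` satisfies `|b| ≤ μh/2` by the second-order Taylor estimate, and the
noise term is centred with variance `(Var ε(θ+h) + Var ε(θ))/h² ≤ 2ς²/(Nh²)` by independence.
Hence the mean-squared error is `b² + variance`. At `h_N` the two terms balance, each being
`μ²h_N²/4`, which gives the value `√2 μς/√N` for the squared bound.
-/
open MeasureTheory ProbabilityTheory

theorem norm_sub_sub_smul_le_of_norm_deriv2_le {F : Type*} [NormedAddCommGroup F]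
    [NormedSpace ℝ F] {f f' f'' : ℝ → F} {C : ℝ} (hf : ∀ y, HasDerivAt f (f' y) y)
    (hf' : ∀ y, HasDerivAt f' (f'' y) y) (bound : ∀ y, ‖f'' y‖ ≤ C) {x h : ℝ}
    (hh : 0 ≤ h) :
    ‖f (x + h) - f x - h • f' x‖ ≤ C * h ^ 2 / 2 := by
  have hslope : ∀ y ∈ Set.Icc x (x + h), ‖f' y - f' x‖ ≤ C * (y - x) :=
    norm_image_sub_le_of_norm_deriv_right_le_segment (HasDerivAt.continuousOn fun y _ => hf' y)
      (fun y _ => (hf' y).hasDerivWithinAt) fun y _ => bound y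
  have hrem : ∀ y, HasDerivAt (fun y => f y - f x - (y - x) • f' x) (f' y - f' x) y :=
    fun y => by
      simpa using ((hf y).sub_const (f x)).fun_sub
        (((hasDerivAt_id y).sub_const x).smul_const (f' x))
  have hB : ∀ y, HasDerivAt (fun y => C * (y - x) ^ 2 / 2) (C * (y - x)) y := fun y => by
    refine (((((hasDerivAt_id' y).sub_const x).fun_pow 2).const_mul C).div_const 2).congr_deriv ?_
    push_cast; ring
  simpa using image_norm_le_of_norm_deriv_right_le_deriv_boundary
    (HasDerivAt.continuousOn fun y _ => hrem y) (fun y _ => (hrem y).hasDerivWithinAt)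
    (by simp) hB (fun y hy => hslope y (Set.Ico_subset_Icc_self hy))
    (Set.right_mem_Icc.2 (le_add_of_nonneg_right hh))

theorem abs_slope_sub_deriv_le_of_abs_deriv2_le {f f' f'' : ℝ → ℝ} {C : ℝ}
    (hf : ∀ y, HasDerivAt f (f' y) y) (hf' : ∀ y, HasDerivAt f' (f'' y) y)
    (bound : ∀ y, |f'' y| ≤ C) {x h : ℝ} (hh : 0 < h) :
    |(f (x + h) - f x) / h - f' x| ≤ C * h / 2 := by
  have := norm_sub_sub_smul_le_of_norm_deriv2_le hf hf' bound hh.le (x := x)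
  rw [Real.norm_eq_abs, smul_eq_mul] at this
  rw [show (f (x + h) - f x) / h - f' x = (f (x + h) - f x - h * f' x) / h by field_simp,
    abs_div, abs_of_pos hh, div_le_iff₀ hh]
  linarith

theorem integral_sq_eq_variance_add_sq {Ω : Type*} [MeasurableSpace Ω] {P : Measure Ω}
    [IsProbabilityMeasure P] {X : Ω → ℝ} (hX : MemLp X 2 P) :
    ∫ ω, X ω ^ 2 ∂P = Var[X; P] + (∫ ω, X ω ∂P) ^ 2 := by
  rw [variance_eq_sub hX]; simp

theorem integral_sq_const_add_sub_div {Ω : Type*} [MeasurableSpace Ω] {P : Measure Ω}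
    [IsProbabilityMeasure P] {X Y : Ω → ℝ} (hX : MemLp X 2 P) (hY : MemLp Y 2 P)
    (hXY : IndepFun X Y P) (hXY_mean : ∫ ω, X ω ∂P = ∫ ω, Y ω ∂P) (b h : ℝ) :
    ∫ ω, (b + (X ω - Y ω) / h) ^ 2 ∂P = b ^ 2 + (Var[X; P] + Var[Y; P]) / h ^ 2 := by
  have hZ : MemLp (fun ω => (X ω - Y ω) / h) 2 P := by
    simpa only [div_eq_mul_inv, Pi.sub_apply] using (hX.sub hY).mul_const h⁻¹
  have hW : MemLp (fun ω => b + (X ω - Y ω) / h) 2 P := (memLp_const b).add hZ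
  have hmean : ∫ ω, (b + (X ω - Y ω) / h) ∂P = b := by
    rw [integral_add (integrable_const b) (hZ.integrable one_le_two), integral_div,
      integral_sub (hX.integrable one_le_two) (hY.integrable one_le_two), hXY_mean]
    simp
  have hvar : Var[fun ω => b + (X ω - Y ω) / h; P] = (Var[X; P] + Var[Y; P]) / h ^ 2 := by
    simp_rw [variance_const_add hZ.aestronglyMeasurable, div_eq_mul_inv, variance_mul_const,
      variance_fun_sub hX hY, hXY.covariance_eq_zero hX hY]
    ring
  rw [integral_sq_eq_variance_add_sq hW, hvar, hmean]
  ring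

theorem integral_sq_noisy_slope_sub_deriv_le {Ω : Type*} [MeasurableSpace Ω] {P : Measure Ω}
    [IsProbabilityMeasure P] {f f' f'' : ℝ → ℝ} {C v : ℝ} (hf : ∀ y, HasDerivAt f (f' y) y)
    (hf' : ∀ y, HasDerivAt f' (f'' y) y) (bound : ∀ y, |f'' y| ≤ C) {X Y : Ω → ℝ}
    (hX : MemLp X 2 P) (hY : MemLp Y 2 P) (hXY : IndepFun X Y P)
    (hXY_mean : ∫ ω, X ω ∂P = ∫ ω, Y ω ∂P) (hvX : Var[X; P] ≤ v) (hvY : Var[Y; P] ≤ v)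
    {x h : ℝ} (hh : 0 < h) :
    ∫ ω, (((f (x + h) + X ω) - (f x + Y ω)) / h - f' x) ^ 2 ∂P
      ≤ C ^ 2 * h ^ 2 / 4 + 2 * v / h ^ 2 := by
  set b := (f (x + h) - f x) / h - f' x
  have hbias : b ^ 2 ≤ (C * h / 2) ^ 2 := by
    rw [← sq_abs]
    gcongr
    exact abs_slope_sub_deriv_le_of_abs_deriv2_le hf hf' bound hh
  calc ∫ ω, (((f (x + h) + X ω) - (f x + Y ω)) / h - f' x) ^ 2 ∂P
      = ∫ ω, (b + (X ω - Y ω) / h) ^ 2 ∂P := by congr 1; funext ω; ring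
    _ = b ^ 2 + (Var[X; P] + Var[Y; P]) / h ^ 2 :=
      integral_sq_const_add_sub_div hX hY hXY hXY_mean b h
    _ ≤ (C * h / 2) ^ 2 + (v + v) / h ^ 2 := by gcongr
    _ = C ^ 2 * h ^ 2 / 4 + 2 * v / h ^ 2 := by ring

theorem sqrt_mse_bound_eq_at_optimal_step {μ ς n h : ℝ} (hμ : 0 < μ) (hς : 0 < ς)
    (hn : 0 < n) (hh : h = (8 : ℝ) ^ ((1 : ℝ) / 4) * ς ^ ((1 : ℝ) / 2) * μ ^ (-(1 : ℝ) / 2)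
      * n ^ (-(1 : ℝ) / 4)) :
    Real.sqrt ((1 / 4) * μ ^ 2 * h ^ 2 + 2 * ς ^ 2 / (h ^ 2 * n))
      = (2 : ℝ) ^ ((1 : ℝ) / 4) * Real.sqrt (μ * ς) * n ^ (-(1 : ℝ) / 4) := by
  set T := (2 : ℝ) ^ ((1 : ℝ) / 4) * Real.sqrt (μ * ς) * n ^ (-(1 : ℝ) / 4)
  have hpos : 0 < h := hh ▸ by positivity
  have h4 : μ ^ 2 * n * h ^ 4 = 8 * ς ^ 2 := by
    rw [hh, mul_pow, mul_pow, mul_pow, ← Real.rpow_mul_natCast (by norm_num),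
      ← Real.rpow_mul_natCast hς.le, ← Real.rpow_mul_natCast hμ.le,
      ← Real.rpow_mul_natCast hn.le]
    norm_num
    rw [Real.rpow_neg_one]
    field_simp
  have T4 : n * T ^ 4 = 2 * (μ * ς) ^ 2 := by
    rw [mul_pow, mul_pow, ← Real.rpow_mul_natCast (by norm_num), ← Real.rpow_mul_natCast hn.le,
      show Real.sqrt (μ * ς) ^ 4 = (Real.sqrt (μ * ς) ^ 2) ^ 2 by ring,
      Real.sq_sqrt (by positivity)]
    norm_num
    rw [Real.rpow_neg_one]
    field_simp
  have hbalance : 2 * ς ^ 2 / (h ^ 2 * n) = (1 / 4) * μ ^ 2 * h ^ 2 := by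
    field_simp; linear_combination -h4
  rw [hbalance, ← Real.sqrt_sq (by positivity : 0 ≤ T)]
  congr 1
  refine (pow_left_inj₀ (by positivity) (by positivity) two_ne_zero).1 ?_
  refine mul_left_cancel₀ hn.ne' ?_
  linear_combination (μ ^ 2 / 4) * h4 - T4

/-- RMSE bound for the noisy forward-difference gradient estimate, and its
value at the optimal step size `h_N = 8^(1/4)ς^(1/2)μ^(−1/2)N^(−1/4)`. -/
theorem stmt_18 {Ω : Type*} [MeasurableSpace Ω] (P : Measure Ω) [IsProbabilityMeasure P]
    (μ ς : ℝ) (hμ : 0 < μ) (hς : 0 < ς) (N : ℕ) (hN : 0 < N)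
    (E E' E'' : ℝ → ℝ)
    (hE' : ∀ x : ℝ, HasDerivAt E (E' x) x)
    (hE'' : ∀ x : ℝ, HasDerivAt E' (E'' x) x)
    (hbound : ∀ x : ℝ, |E'' x| ≤ μ)
    (ε : ℝ → Ω → ℝ)
    (hmem : ∀ x : ℝ, MemLp (ε x) 2 P)
    (hmean : ∀ x : ℝ, ∫ ω, ε x ω ∂P = 0)
    (hvar : ∀ x : ℝ, variance (ε x) P ≤ ς ^ 2 / N)
    (hind : ∀ x y : ℝ, x ≠ y → IndepFun (ε x) (ε y) P)
    (θ : ℝ) :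
    (∀ h : ℝ, 0 < h →
      Real.sqrt (∫ ω,
          (((E (θ + h) + ε (θ + h) ω) - (E θ + ε θ ω)) / h - E' θ) ^ 2 ∂P)
        ≤ Real.sqrt ((1 / 4) * μ ^ 2 * h ^ 2 + 2 * ς ^ 2 / (h ^ 2 * N))) ∧
    (∀ h : ℝ, h = (8 : ℝ) ^ ((1 : ℝ) / 4) * ς ^ ((1 : ℝ) / 2)
        * μ ^ (-(1 : ℝ) / 2) * (N : ℝ) ^ (-(1 : ℝ) / 4) →
      Real.sqrt (∫ ω,
          (((E (θ + h) + ε (θ + h) ω) - (E θ + ε θ ω)) / h - E' θ) ^ 2 ∂P)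
        ≤ (2 : ℝ) ^ ((1 : ℝ) / 4) * Real.sqrt (μ * ς) * (N : ℝ) ^ (-(1 : ℝ) / 4)) := by
  have hN' : (0 : ℝ) < N := Nat.cast_pos.2 hN
  have rmse_le : ∀ h : ℝ, 0 < h →
      Real.sqrt (∫ ω, (((E (θ + h) + ε (θ + h) ω) - (E θ + ε θ ω)) / h - E' θ) ^ 2 ∂P)
        ≤ Real.sqrt ((1 / 4) * μ ^ 2 * h ^ 2 + 2 * ς ^ 2 / (h ^ 2 * N)) := fun h hh => by
    have hmse := integral_sq_noisy_slope_sub_deriv_le hE' hE'' hbound (hmem (θ + h)) (hmem θ)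
      (hind _ _ (by linarith)) ((hmean _).trans (hmean θ).symm) (hvar _) (hvar _) (x := θ) hh
    refine Real.sqrt_le_sqrt (hmse.trans_eq ?_)
    field_simp
  refine ⟨rmse_le, fun h hh => ?_⟩
  have hpos : 0 < h := hh ▸ by positivity
  exact (rmse_le h hpos).trans (sqrt_mse_bound_eq_at_optimal_step hμ hς hN' hh).le
end
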